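/- Let w ∈ 𝔚_p with |(w⁻¹Δ) \ Φ_p| = 1. Then either Φ⁺ \ Φ_p⁺ ⊆ w⁻¹Φ⁺ or Φ⁺ \ Φ_p⁺ ⊆ w⁻¹Φ⁻; that is, Φ⁺ \ Φ_p⁺ equals either (Φ⁺ \ Φ_p⁺) ∩ w⁻¹Φ⁺ or (Φ⁺ \ Φ_p⁺) ∩ w⁻¹Φ⁻. -/

import Mathlib

open scoped Classical RealInnerProductSpace

noncomputable section

namespace Weng

/-- The completed Riemann zeta function `ζ̂(s) = π^(-s/2) Γ(s/2) ζ(s)`. -/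
def zetaHat (s : ℂ) : ℂ := completedRiemannZeta s

/-- The entire Riemann xi function `ξ(s) = s (s-1) ζ̂(s)`
(written in terms of the entire function `Λ₀` so that the removable singularities
at `s = 0, 1` are correctly filled in). -/
def xi (s : ℂ) : ℂ := s * (s - 1) * completedRiemannZeta₀ s + 1

variable (V : Type) [NormedAddCommGroup V] [InnerProductSpace ℝ V] [FiniteDimensional ℝ V]

/-- The coroot `α^∨ = 2 α / ⟨α, α⟩` of a vector `α`. -/
def coroot (α : V) : V := (2 / ⟪α, α⟫) • α

/-- Reflection in the hyperplane orthogonal to `α`. -/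
def srefl (α : V) : V ≃ₗᵢ[ℝ] V := Submodule.reflection (ℝ ∙ α)ᗮ

variable {V}

/-- A reduced irreducible crystallographic root system `Φ` in a finite dimensional real
inner product space `V`, together with a fundamental system `Δ = {α_1, …, α_r}` (indexed by
`Fin r`), the corresponding positive system `Φ⁺` (`Pos`), and the fundamental weights
`λ_1, …, λ_r` (`fw`). -/
structure RootSystemData (V : Type) [NormedAddCommGroup V] [InnerProductSpace ℝ V]
    [FiniteDimensional ℝ V] : Type where
  /-- the rank -/
  r : ℕ
  /-- the root system -/
  Φ : Finset V
  /-- the simple roots -/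
  Δ : Fin r → V
  /-- the positive roots -/
  Pos : Finset V
  /-- the fundamental weights -/
  fw : Fin r → V
  hΔinj : Function.Injective Δ
  hΔPos : ∀ j, Δ j ∈ Pos
  hspan : Submodule.span ℝ (Φ : Set V) = ⊤
  hzero : (0 : V) ∉ Φ
  hreduced : ∀ α ∈ Φ, ∀ t : ℝ, t • α ∈ (Φ : Set V) → t = 1 ∨ t = -1
  hcrys : ∀ α ∈ Φ, ∀ β ∈ Φ, ∃ n : ℤ, ⟪β, coroot V α⟫ = (n : ℝ)
  hrefl : ∀ α ∈ Φ, ∀ β ∈ Φ, β - ⟪β, coroot V α⟫ • α ∈ Φ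
  hirred : ∀ S T : Finset V, S ∪ T = Φ → (∀ a ∈ S, ∀ b ∈ T, ⟪a, b⟫ = 0) →
    S = ∅ ∨ T = ∅
  hPosSub : Pos ⊆ Φ
  hNegSub : ∀ α ∈ Pos, -α ∈ Φ
  hPosDec : ∀ α ∈ Φ, (α ∈ Pos ∧ -α ∉ Pos) ∨ (α ∉ Pos ∧ -α ∈ Pos)
  hPosComb : ∀ α ∈ Pos, ∃ c : Fin r → ℕ, α = ∑ j, (c j : ℝ) • Δ j
  hfw : ∀ i j, ⟪fw i, coroot V (Δ j)⟫ = if i = j then 1 else 0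

namespace RootSystemData

variable {V : Type} [NormedAddCommGroup V] [InnerProductSpace ℝ V] [FiniteDimensional ℝ V]
variable (d : RootSystemData V)

/-- The set `Φ⁻ = -Φ⁺` of negative roots, as a `Finset`. -/
def NegS : Finset V := d.Pos.image (fun α => -α)

/-- The Weyl vector `ρ = (1/2) Σ_{α ∈ Φ⁺} α`. -/
def rho : V := (2⁻¹ : ℝ) • ∑ α ∈ d.Pos, α

/-- The height `ht α^∨ = ⟨ρ, α^∨⟩` of the coroot of `α`. -/
def ht (α : V) : ℝ := ⟪d.rho, coroot V α⟫

/-- The Weyl group `W`, as the subgroup of the group of linear isometries of `V`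
generated by the reflections in the simple roots. -/
def W : Subgroup (V ≃ₗᵢ[ℝ] V) := Subgroup.closure (Set.range fun j => srefl V (d.Δ j))

/-- The subset `Δ_p = Δ \ {α_p}` of the simple roots, as a set of vectors. -/
def DeltaP (p : Fin d.r) : Set V := d.Δ '' {j | j ≠ p}

/-- `Δ_p` as a `Finset`. -/
def DeltaPFin (p : Fin d.r) : Finset V := (Finset.univ.filter (fun j => j ≠ p)).image d.Δ

/-- The subgroup `W_p` of `W` generated by the reflections in the simple roots in `Δ_p`. -/
def Wp (p : Fin d.r) : Subgroup (V ≃ₗᵢ[ℝ] V) :=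
  Subgroup.closure ((fun j => srefl V (d.Δ j)) '' {j | j ≠ p})

/-- The root subsystem `Φ_p = Φ ∩ span_ℝ(Δ_p)`. -/
def PhiP (p : Fin d.r) : Finset V :=
  d.Φ.filter (fun α => α ∈ Submodule.span ℝ (d.DeltaP p))

/-- The positive system `Φ_p⁺ = Φ⁺ ∩ Φ_p` of `Φ_p`. -/
def PhiPpos (p : Fin d.r) : Finset V := d.Pos ∩ d.PhiP p

/-- `ρ_p = (1/2) Σ_{α ∈ Φ_p⁺} α`. -/
def rhoP (p : Fin d.r) : V := (2⁻¹ : ℝ) • ∑ α ∈ d.PhiPpos p, α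

/-- The constant `c_p = 2 ⟨λ_p - ρ_p, α_p^∨⟩`. -/
def cp (p : Fin d.r) : ℝ := 2 * ⟪d.fw p - d.rhoP p, coroot V (d.Δ p)⟫

/-- The set `𝔚_p = {w ∈ W : Δ_p ⊆ w⁻¹(Δ ∪ Φ⁻)}`. -/
def frakW (p : Fin d.r) : Set (V ≃ₗᵢ[ℝ] V) :=
  {w | w ∈ d.W ∧ ∀ j : Fin d.r, j ≠ p →
    (w (d.Δ j) ∈ Set.range d.Δ ∨ w (d.Δ j) ∈ d.NegS)}

/-- `l_p(w) = |(Φ⁺ \ Φ_p⁺) ∩ w⁻¹ Φ⁻|`. -/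
def lp (p : Fin d.r) (w : V ≃ₗᵢ[ℝ] V) : ℕ :=
  ((d.Pos \ d.PhiPpos p).filter (fun α => w α ∈ d.NegS)).card

/-- `N_{p,w}(k,h) = #{α ∈ w⁻¹Φ⁻ : ⟨λ_p, α^∨⟩ = k, ht α^∨ = h}`. -/
def Npw (p : Fin d.r) (w : V ≃ₗᵢ[ℝ] V) (k h : ℝ) : ℕ :=
  (d.Φ.filter (fun α => w α ∈ d.NegS ∧ ⟪d.fw p, coroot V α⟫ = k ∧ d.ht α = h)).card

/-- `N_p(k,h) = #{α ∈ Φ : ⟨λ_p, α^∨⟩ = k, ht α^∨ = h}`. -/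
def Np (p : Fin d.r) (k h : ℝ) : ℕ :=
  (d.Φ.filter (fun α => ⟪d.fw p, coroot V α⟫ = k ∧ d.ht α = h)).card

/-- `M_p(k,h) = max_{w ∈ 𝔚_p} (N_{p,w}(k,h-1) - N_{p,w}(k,h))`. -/
def Mp (p : Fin d.r) (k h : ℝ) : ℤ :=
  sSup {n : ℤ | ∃ w ∈ d.frakW p, n = (d.Npw p w k (h - 1) : ℤ) - (d.Npw p w k h : ℤ)}

/-- The period `ω_p(s)`. -/
def omegaP (p : Fin d.r) (s : ℂ) : ℂ :=
  ∑ᶠ w ∈ d.frakW p,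
    (∏ α ∈ d.Φ.filter (fun α => w α ∈ Set.range d.Δ ∧ α ∉ d.DeltaP p),
        ((⟪d.fw p, coroot V α⟫ : ℂ) * s + (d.ht α : ℂ) - 1)⁻¹) *
    (∏ α ∈ d.Pos.filter (fun α => w α ∈ d.NegS ∧ α ∉ d.DeltaP p),
        zetaHat ((⟪d.fw p, coroot V α⟫ : ℂ) * s + (d.ht α : ℂ))) *
    (∏ α ∈ d.Φ.filter (fun α => -α ∈ d.Pos ∧ w (-α) ∈ d.NegS),
        (zetaHat ((⟪d.fw p, coroot V α⟫ : ℂ) * s + (d.ht α : ℂ)))⁻¹)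

/-- The Weng zeta function
`ζ̂_p(s) = ω_p(s) ∏_{k ≥ 0} ∏_{h ≥ 2} ζ̂(k s + h)^{M_p(k,h)}`
(the product is finite: `M_p(k,h) = 0` outside of the displayed finite range). -/
def zetaWeng (p : Fin d.r) (s : ℂ) : ℂ :=
  d.omegaP p s *
    ∏ k ∈ Finset.range (d.Φ.card + 2), ∏ h ∈ Finset.range (d.Φ.card + 2),
      (if 2 ≤ h then zetaHat ((k : ℂ) * s + (h : ℂ)) ^ (d.Mp p (k : ℝ) (h : ℝ)) else 1)


/-- `δ_{α,w} = 1` if `α ∈ w⁻¹Φ⁺`, and `δ_{α,w} = 0` if `α ∈ w⁻¹Φ⁻`. -/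
def deltaIdx (w : V ≃ₗᵢ[ℝ] V) (α : V) : ℕ := if w α ∈ d.Pos then 1 else 0

/-- `X̃_{p,w}(s) = ξ(2)^{|Δ_p ∩ w⁻¹Φ⁺|} ∏_{α ∈ Φ⁺ \ Δ_p} ξ(⟨λ_p,α^∨⟩ s + ht α^∨ + δ_{α,w})`. -/
def Xtilde (p : Fin d.r) (w : V ≃ₗᵢ[ℝ] V) (s : ℂ) : ℂ :=
  xi 2 ^ ((d.DeltaPFin p).filter (fun α => w α ∈ d.Pos)).card *
  ∏ α ∈ d.Pos.filter (fun α => α ∉ d.DeltaP p),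
    xi ((⟪d.fw p, coroot V α⟫ : ℂ) * s + (d.ht α : ℂ) + (d.deltaIdx w α : ℂ))

/-- The polynomial factor attached to a single `v ∈ 𝔚_p` appearing in `Q̃_{p,w}` and `Q_p`. -/
def Qfactor (p : Fin d.r) (v : V ≃ₗᵢ[ℝ] V) (s : ℂ) : ℂ :=
  (2 : ℂ) ^ ((d.DeltaPFin p).filter (fun α => v α ∈ d.Pos)).card *
  (∏ α ∈ d.Φ.filter (fun α => v α ∈ Set.range d.Δ ∧ α ∉ d.DeltaP p),
      ((⟪d.fw p, coroot V α⟫ : ℂ) * s + (d.ht α : ℂ) - 1)) *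
  ∏ α ∈ d.Pos.filter (fun α => α ∉ d.DeltaP p),
    ((⟪d.fw p, coroot V α⟫ : ℂ) * s + (d.ht α : ℂ) + (d.deltaIdx v α : ℂ)) *
      ((⟪d.fw p, coroot V α⟫ : ℂ) * s + (d.ht α : ℂ) + (d.deltaIdx v α : ℂ) - 1)

/-- The polynomial `Q̃_{p,w}(s)` (product of the `Qfactor`s over all `v ∈ 𝔚_p`, `v ≠ w`). -/
def Qtilde (p : Fin d.r) (w : V ≃ₗᵢ[ℝ] V) (s : ℂ) : ℂ :=
  ∏ᶠ v ∈ d.frakW p \ {w}, d.Qfactor p v s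

/-- The polynomial `Q_p(s)` (product of the `Qfactor`s over all `v ∈ 𝔚_p`). -/
def Qp (p : Fin d.r) (s : ℂ) : ℂ := ∏ᶠ v ∈ d.frakW p, d.Qfactor p v s

/-- The entire function `X_p(s) = Σ_{w ∈ 𝔚_p} Q̃_{p,w}(s) X̃_{p,w}(s)`. -/
def Xp (p : Fin d.r) (s : ℂ) : ℂ := ∑ᶠ w ∈ d.frakW p, d.Qtilde p w s * d.Xtilde p w s

/-- `X_{p,w}(s) = ∏_{α ∈ Φ⁺ \ Φ_p⁺} ξ(⟨λ_p,α^∨⟩ s + ht α^∨ + δ_{α,w})`. -/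
def Xpw (p : Fin d.r) (w : V ≃ₗᵢ[ℝ] V) (s : ℂ) : ℂ :=
  ∏ α ∈ d.Pos \ d.PhiPpos p,
    xi ((⟪d.fw p, coroot V α⟫ : ℂ) * s + (d.ht α : ℂ) + (d.deltaIdx w α : ℂ))

/-- The constant `C_{p,w} = ξ(2)^{|Δ_p ∩ w⁻¹Φ⁺|} ∏_{α ∈ Φ_p⁺ \ Δ_p} ξ(ht α^∨ + δ_{α,w})`. -/
def Cpw (p : Fin d.r) (w : V ≃ₗᵢ[ℝ] V) : ℂ :=
  xi 2 ^ ((d.DeltaPFin p).filter (fun α => w α ∈ d.Pos)).card *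
  ∏ α ∈ (d.PhiPpos p).filter (fun α => α ∉ d.DeltaP p),
    xi ((d.ht α : ℂ) + (d.deltaIdx w α : ℂ))

/-- `Q_{p,w}(s) = C_{p,w} Q̃_{p,w}(s)`. -/
def Qpw (p : Fin d.r) (w : V ≃ₗᵢ[ℝ] V) (s : ℂ) : ℂ := d.Cpw p w * d.Qtilde p w s

/-- `𝔚_p⁺ = {w ∈ 𝔚_p : l_p(w) < |Φ⁺ \ Φ_p⁺| / 2}`. -/
def frakWplus (p : Fin d.r) : Set (V ≃ₗᵢ[ℝ] V) :=
  {w ∈ d.frakW p | 2 * d.lp p w < (d.Pos \ d.PhiPpos p).card}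

/-- `𝔚_p⁰ = {w ∈ 𝔚_p : l_p(w) = |Φ⁺ \ Φ_p⁺| / 2}`. -/
def frakWzero (p : Fin d.r) : Set (V ≃ₗᵢ[ℝ] V) :=
  {w ∈ d.frakW p | 2 * d.lp p w = (d.Pos \ d.PhiPpos p).card}

/-- `𝔚_p‡ = {w ∈ 𝔚_p : l_p(w) = 0}`. -/
def frakWdag (p : Fin d.r) : Set (V ≃ₗᵢ[ℝ] V) :=
  {w ∈ d.frakW p | d.lp p w = 0}

/-- `E_p(s) = Σ_{w ∈ 𝔚_p⁺} Q_{p,w}(s) X_{p,w}(s) + (1/2) Σ_{w ∈ 𝔚_p⁰} Q_{p,w}(s) X_{p,w}(s)`. -/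
def Ep (p : Fin d.r) (s : ℂ) : ℂ :=
  (∑ᶠ w ∈ d.frakWplus p, d.Qpw p w s * d.Xpw p w s) +
    (2 : ℂ)⁻¹ * ∑ᶠ w ∈ d.frakWzero p, d.Qpw p w s * d.Xpw p w s

end RootSystemData

end Weng

/-!
Let `γ` be the unique root of `w⁻¹Δ` outside `Φ_p`. Every other `w⁻¹α_j` lies in `Φ_p`, which is
orthogonal to the fundamental weight `λ_p`, so for a positive root `δ` the number `⟨λ_p, w⁻¹δ⟩` is
a natural multiple of `t = ⟨λ_p, γ⟩`. A root `β ∈ Φ⁺ \ Φ_p⁺` has `⟨λ_p, β⟩ > 0`, so `wβ ∈ Φ⁺`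
forces `t > 0` and `wβ ∈ Φ⁻` forces `t < 0`: the sign of `t` decides the side for all such `β`.
-/

namespace Weng

variable {V : Type} [NormedAddCommGroup V] [InnerProductSpace ℝ V]

theorem inner_coroot (x a : V) : ⟪x, coroot V a⟫ = 2 / ‖a‖ ^ 2 * ⟪x, a⟫ := by
  rw [coroot, real_inner_smul_right, real_inner_self_eq_norm_sq]

theorem srefl_apply (a x : V) : srefl V a x = x - ⟪x, coroot V a⟫ • a := by
  rw [srefl, Submodule.reflection_orthogonal_apply, Submodule.reflection_singleton_apply,
    inner_coroot, real_inner_comm, neg_sub, two_nsmul, ← add_smul]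
  congr 2
  simp only [RCLike.ofReal_real_eq_id, id_eq]
  ring

namespace RootSystemData

variable [FiniteDimensional ℝ V] (d : RootSystemData V)

theorem simple_mem_Phi (j : Fin d.r) : d.Δ j ∈ d.Φ :=
  d.hPosSub (d.hΔPos j)

theorem simple_ne_zero (j : Fin d.r) : d.Δ j ≠ 0 :=
  fun h => d.hzero (h ▸ d.simple_mem_Phi j)

theorem apply_mem_Phi_iff {w : V ≃ₗᵢ[ℝ] V} (hw : w ∈ d.W) (α : V) : w α ∈ d.Φ ↔ α ∈ d.Φ := by
  induction hw using Subgroup.closure_induction generalizing α with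
  | mem s hs =>
    obtain ⟨j, rfl⟩ := hs
    have hmaps : ∀ β ∈ d.Φ, srefl V (d.Δ j) β ∈ d.Φ := fun β hβ => by
      rw [srefl_apply]
      exact d.hrefl _ (d.simple_mem_Phi j) β hβ
    refine ⟨fun h => ?_, hmaps α⟩
    simpa only [srefl, Submodule.reflection_reflection] using hmaps _ h
  | one => rfl
  | mul x y _ _ hx hy => exact (hx _).trans (hy α)
  | inv x _ hx => rw [← hx, LinearIsometryEquiv.coe_inv, LinearIsometryEquiv.apply_symm_apply]

theorem mem_NegS_iff {x : V} : x ∈ d.NegS ↔ -x ∈ d.Pos := by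
  simp [NegS, neg_eq_iff_eq_neg]

theorem mem_Pos_or_mem_NegS {α : V} (hα : α ∈ d.Φ) : α ∈ d.Pos ∨ α ∈ d.NegS := by
  rw [mem_NegS_iff]
  rcases d.hPosDec α hα with h | h
  exacts [.inl h.1, .inr h.2]

theorem inner_fw_simple_of_ne {p j : Fin d.r} (hj : j ≠ p) : ⟪d.fw p, d.Δ j⟫ = 0 := by
  have h := d.hfw p j
  rw [if_neg hj.symm, inner_coroot] at h
  have : (2 / ‖d.Δ j‖ ^ 2 : ℝ) ≠ 0 := by
    have := norm_ne_zero_iff.2 (d.simple_ne_zero j)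
    positivity
  exact (mul_eq_zero.1 h).resolve_left this

theorem inner_fw_simple_self_pos (p : Fin d.r) : 0 < ⟪d.fw p, d.Δ p⟫ := by
  have h := d.hfw p p
  rw [if_pos rfl, inner_coroot] at h
  exact pos_of_mul_pos_right (h ▸ one_pos) (by positivity)

theorem inner_fw_eq_zero_of_mem_span {p : Fin d.r} {x : V}
    (hx : x ∈ Submodule.span ℝ (d.DeltaP p)) : ⟪d.fw p, x⟫ = 0 := by
  induction hx using Submodule.span_induction with
  | mem y hy =>
    obtain ⟨j, hj, rfl⟩ := hy
    exact d.inner_fw_simple_of_ne hj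
  | zero => exact inner_zero_right _
  | add y z _ _ hy hz => rw [inner_add_right, hy, hz, add_zero]
  | smul t y _ hy => rw [real_inner_smul_right, hy, mul_zero]

theorem inner_fw_pos_of_mem_Pos_sdiff {p : Fin d.r} {β : V} (hβ : β ∈ d.Pos \ d.PhiPpos p) :
    0 < ⟪d.fw p, β⟫ := by
  obtain ⟨hβPos, hβp⟩ := Finset.mem_sdiff.1 hβ
  obtain ⟨c, rfl⟩ := d.hPosComb β hβPos
  have hinner : ⟪d.fw p, ∑ j, (c j : ℝ) • d.Δ j⟫ = c p * ⟪d.fw p, d.Δ p⟫ := by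
    rw [inner_sum, Finset.sum_eq_single p (fun j _ hj => by
      rw [real_inner_smul_right, d.inner_fw_simple_of_ne hj, mul_zero]) (by simp),
      real_inner_smul_right]
  have hcp : c p ≠ 0 := by
    intro hcp
    refine hβp (Finset.mem_inter.2 ⟨hβPos, Finset.mem_filter.2
      ⟨d.hPosSub hβPos, Submodule.sum_mem _ fun j _ => ?_⟩⟩)
    rcases eq_or_ne j p with rfl | hj
    · simp [hcp]
    · exact Submodule.smul_mem _ _ (Submodule.subset_span ⟨j, hj, rfl⟩)
  rw [hinner]
  exact mul_pos (by exact_mod_cast Nat.pos_of_ne_zero hcp) (d.inner_fw_simple_self_pos p)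

theorem exists_nat_mul_of_mem_Pos (g : V →ₗ[ℝ] ℝ) (t : ℝ)
    (hg : ∀ j, g (d.Δ j) = 0 ∨ g (d.Δ j) = t) {δ : V} (hδ : δ ∈ d.Pos) :
    ∃ m : ℕ, g δ = m * t := by
  obtain ⟨c, rfl⟩ := d.hPosComb δ hδ
  refine ⟨∑ j, if g (d.Δ j) = t then c j else 0, ?_⟩
  rw [map_sum, Nat.cast_sum, Finset.sum_mul]
  refine Finset.sum_congr rfl fun j _ => ?_
  rw [map_smul, smul_eq_mul]
  by_cases h : g (d.Δ j) = t
  · rw [if_pos h, h]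
  · rw [if_neg h, (hg j).resolve_right h, Nat.cast_zero, mul_zero, zero_mul]

theorem inner_fw_symm_simple_eq_zero_or {p : Fin d.r} {w : V ≃ₗᵢ[ℝ] V} (hw : w ∈ d.W) {γ : V}
    (hγ : d.Φ.filter (fun α => w α ∈ Set.range d.Δ ∧ α ∉ d.PhiP p) = {γ}) (j : Fin d.r) :
    ⟪d.fw p, w.symm (d.Δ j)⟫ = 0 ∨ ⟪d.fw p, w.symm (d.Δ j)⟫ = ⟪d.fw p, γ⟫ := by
  by_cases hj : w.symm (d.Δ j) ∈ d.PhiP p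
  · exact .inl (d.inner_fw_eq_zero_of_mem_span (Finset.mem_filter.1 hj).2)
  · have hΦ : w.symm (d.Δ j) ∈ d.Φ := (d.apply_mem_Phi_iff hw _).1 <| by
      rw [w.apply_symm_apply]
      exact d.simple_mem_Phi j
    have hexit : w.symm (d.Δ j) ∈ d.Φ.filter (fun α => w α ∈ Set.range d.Δ ∧ α ∉ d.PhiP p) :=
      Finset.mem_filter.2 ⟨hΦ, ⟨j, (w.apply_symm_apply _).symm⟩, hj⟩
    rw [hγ, Finset.mem_singleton] at hexit
    exact .inr (by rw [hexit])

theorem inner_fw_symm_eq_nat_mul {p : Fin d.r} {w : V ≃ₗᵢ[ℝ] V} (hw : w ∈ d.W) {γ : V}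
    (hγ : d.Φ.filter (fun α => w α ∈ Set.range d.Δ ∧ α ∉ d.PhiP p) = {γ}) {δ : V}
    (hδ : δ ∈ d.Pos) : ∃ m : ℕ, ⟪d.fw p, w.symm δ⟫ = m * ⟪d.fw p, γ⟫ :=
  d.exists_nat_mul_of_mem_Pos (innerₛₗ ℝ (d.fw p) ∘ₗ w.symm.toLinearEquiv.toLinearMap) _
    (d.inner_fw_symm_simple_eq_zero_or hw hγ) hδ

end RootSystemData

end Weng

open Weng

/-- If `w ∈ 𝔚_p` and `|(w⁻¹Δ) \ Φ_p| = 1`, then `Φ⁺ \ Φ_p⁺` is contained in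
`w⁻¹Φ⁺` or in `w⁻¹Φ⁻`. -/
theorem weng_dichotomy_for_single_exit
    {V : Type} [NormedAddCommGroup V] [InnerProductSpace ℝ V] [FiniteDimensional ℝ V]
    (d : RootSystemData V) (p : Fin d.r)
    (w : V ≃ₗᵢ[ℝ] V) (hw : w ∈ d.frakW p)
    (hcard : (d.Φ.filter (fun α => w α ∈ Set.range d.Δ ∧ α ∉ d.PhiP p)).card = 1) :
    (∀ α ∈ d.Pos \ d.PhiPpos p, w α ∈ d.Pos) ∨
    (∀ α ∈ d.Pos \ d.PhiPpos p, w α ∈ d.NegS) := by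
  obtain ⟨γ, hγ⟩ := Finset.card_eq_one.1 hcard
  have hpos : ∀ β ∈ d.Pos \ d.PhiPpos p, w β ∈ d.Pos → 0 < ⟪d.fw p, γ⟫ := by
    intro β hβ hwβ
    obtain ⟨m, hm⟩ := d.inner_fw_symm_eq_nat_mul hw.1 hγ hwβ
    rw [w.symm_apply_apply] at hm
    exact pos_of_mul_pos_right (hm ▸ d.inner_fw_pos_of_mem_Pos_sdiff hβ) m.cast_nonneg
  have hneg : ∀ β ∈ d.Pos \ d.PhiPpos p, w β ∈ d.NegS → ⟪d.fw p, γ⟫ < 0 := by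
    intro β hβ hwβ
    obtain ⟨m, hm⟩ := d.inner_fw_symm_eq_nat_mul hw.1 hγ (d.mem_NegS_iff.1 hwβ)
    rw [map_neg, w.symm_apply_apply, inner_neg_right] at hm
    exact neg_of_mul_neg_right (hm ▸ neg_neg_of_pos (d.inner_fw_pos_of_mem_Pos_sdiff hβ))
      m.cast_nonneg
  have hsides : ∀ β ∈ d.Pos \ d.PhiPpos p, w β ∈ d.Pos ∨ w β ∈ d.NegS := fun β hβ =>
    d.mem_Pos_or_mem_NegS ((d.apply_mem_Phi_iff hw.1 β).2 (d.hPosSub (Finset.mem_sdiff.1 hβ).1))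
  rcases lt_or_ge 0 ⟪d.fw p, γ⟫ with ht | ht
  · exact .inl fun β hβ => (hsides β hβ).resolve_right fun h => (hneg β hβ h).not_gt ht
  · exact .inr fun β hβ => (hsides β hβ).resolve_left fun h => (hpos β hβ h).not_ge ht
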